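/- Let D = (R, A) be a digraph with |R| = k, and let G be its connectivity-shift graph. For distinct u, v ∈ R, if C is a vertex set of G separating u from v' with u, v' ∉ C, then |C| ≥ k, and |C| = k + κ_D(u,v) is achievable: every minimum u–v' vertex cut in G has size exactly k + κ_D(u,v). -/

import Mathlib

open SimpleGraph

/-- The interior (internal vertices) of a walk from `u` to `v`. -/
def SimpleGraph.Walk.interior {V : Type*} {G : SimpleGraph V} {u v : V} (p : G.Walk u v) :
    Set V := {x | x ∈ p.support ∧ x ≠ u ∧ x ≠ v}

/-- The maximum number of pairwise internally disjoint `u`-`v` paths in `G`. -/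
noncomputable def localKappa {V : Type*} (G : SimpleGraph V) (u v : V) : ℕ :=
  sSup {m | ∃ P : Fin m → G.Path u v, Function.Injective P ∧
    ∀ i j, i ≠ j → (P i : G.Walk u v).interior ∩ (P j : G.Walk u v).interior = ∅}

/-- The connectivity of `G`: minimum over ordered pairs of distinct vertices. -/
noncomputable def graphKappa {V : Type*} (G : SimpleGraph V) : ℕ :=
  sInf {m | ∃ s t : V, s ≠ t ∧ m = localKappa G s t}

/-- A directed path from `u` to `v` in the digraph given by the relation `A`. -/
structure DiPath {R : Type*} (A : R → R → Prop) (u v : R) where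
  verts : List R
  chain : List.Chain A u verts
  ends : (u :: verts).getLast (List.cons_ne_nil u verts) = v
  nodup : (u :: verts).Nodup

/-- The interior (internal vertices) of a directed path. -/
def DiPath.interior {R : Type*} {A : R → R → Prop} {u v : R} (P : DiPath A u v) : Set R :=
  {x | x ∈ u :: P.verts ∧ x ≠ u ∧ x ≠ v}

/-- The maximum number of pairwise internally disjoint directed `u`-`v` paths. -/
noncomputable def diKappa {R : Type*} (A : R → R → Prop) (u v : R) : ℕ :=
  sSup {m | ∃ P : Fin m → DiPath A u v, Function.Injective P ∧
    ∀ i j, i ≠ j → (P i).interior ∩ (P j).interior = ∅}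

/-- The connectivity of a digraph. -/
noncomputable def diGraphKappa {R : Type*} (A : R → R → Prop) : ℕ :=
  sInf {m | ∃ s t : R, s ≠ t ∧ m = diKappa A s t}

/-- A digraph (relation) is acyclic: no directed cycle. -/
def DiAcyclic {R : Type*} (A : R → R → Prop) : Prop := ∀ u, ¬ Relation.TransGen A u u

/-- The connectivity-shift graph of the digraph `A` on `R`, on vertex set `R ⊕ R`:
cliques on both copies, the matching, and an edge `(inl u, inr v)` for each arc `uv`. -/
def shiftGraph {R : Type*} (A : R → R → Prop) : SimpleGraph (R ⊕ R) where
  Adj x y := match x, y with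
    | .inl u, .inl v => u ≠ v
    | .inr u, .inr v => u ≠ v
    | .inl u, .inr v => A u v ∨ u = v
    | .inr v, .inl u => A u v ∨ u = v
  symm := ⟨by rintro (u|u) (v|v) h <;> simp_all <;> tauto⟩
  loopless := ⟨by rintro (u|u) h <;> simp_all⟩

/-- `G` is `k`-connected: more than `k` vertices, and removing fewer than `k`
vertices leaves a connected graph. -/
def IsKConnected {V : Type*} [Fintype V] (G : SimpleGraph V) (k : ℕ) : Prop :=
  k < Fintype.card V ∧ ∀ C : Finset V, C.card < k →
    (G.induce ((↑C : Set V)ᶜ)).Connected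

/-- The combined graph: `p` connectivity-shift gadgets sharing the common clique on `R`. -/
def combGraph {R : Type*} (p : ℕ) (A : Fin p → R → R → Prop) :
    SimpleGraph (R ⊕ Fin p × R) where
  Adj x y := match x, y with
    | .inl u, .inl v => u ≠ v
    | .inl u, .inr (i, v) => A i u v ∨ u = v
    | .inr (i, v), .inl u => A i u v ∨ u = v
    | .inr (i, u), .inr (j, v) => i = j ∧ u ≠ v
  symm := ⟨by rintro (u|⟨i,u⟩) (v|⟨j,v⟩) h <;> simp_all <;> tauto⟩
  loopless := ⟨by rintro (u|⟨i,u⟩) h <;> simp_all⟩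

set_option linter.unusedSectionVars false
set_option maxHeartbeats 1600000 in
section
namespace MG
open List
variable {R : Type*}


lemma exists_first_split (p : R → Prop) [DecidablePred p] :
    ∀ {l : List R}, (∃ x ∈ l, p x) → ∃ t c d, l = t ++ c :: d ∧ p c ∧ ∀ x ∈ t, ¬ p x := by
  intro l h
  induction l with
  | nil => simp at h
  | cons a t ih =>
    by_cases hpa : p a
    · exact ⟨[], a, t, by simp, hpa, by simp⟩
    · obtain ⟨x, hx, hpx⟩ := h
      have hx' : x ∈ t := by
        rcases mem_cons.1 hx with h1 | h1
        · exact absurd (h1 ▸ hpx) hpa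
        · exact h1
      obtain ⟨t', c, d, rfl, hc, ht'⟩ := ih ⟨x, hx', hpx⟩
      exact ⟨a :: t', c, d, by simp, hc, by
        intro y hy; rcases mem_cons.1 hy with rfl | hy
        exacts [hpa, ht' y hy]⟩

lemma exists_last_split (p : R → Prop) [DecidablePred p] :
    ∀ {l : List R}, (∃ x ∈ l, p x) → ∃ t c d, l = t ++ c :: d ∧ p c ∧ ∀ x ∈ d, ¬ p x := by
  intro l h
  induction l with
  | nil => simp at h
  | cons a t ih =>
    by_cases ht : ∃ x ∈ t, p x
    · obtain ⟨t', c, d, heq, hc, hd⟩ := ih ht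
      exact ⟨a :: t', c, d, by simp [heq], hc, hd⟩
    · push_neg at ht
      obtain ⟨x, hx, hpx⟩ := h
      have : x = a := by
        rcases mem_cons.1 hx with h1 | h1
        · exact h1
        · exact absurd hpx (ht x h1)
      exact ⟨[], a, t, by simp, this ▸ hpx, ht⟩

lemma chain'_glue {r : R → R → Prop} {p q : List R} {x : R}
    (h1 : IsChain r (p ++ [x])) (h2 : IsChain r (x :: q)) : IsChain r (p ++ x :: q) := by
  have heq : p ++ x :: q = (p ++ [x]) ++ q := by simp
  rw [heq, isChain_append]
  refine ⟨h1, (isChain_cons.1 h2).2, ?_⟩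
  intro y hy z hz
  rw [getLast?_concat] at hy
  cases hy
  exact (isChain_cons.1 h2).1 z hz

lemma getLast_eq_of_getLast?_eq {l₁ l₂ : List R} (h1 : l₁ ≠ []) (h2 : l₂ ≠ [])
    (h : l₁.getLast? = l₂.getLast?) : l₁.getLast h1 = l₂.getLast h2 := by
  rw [getLast?_eq_getLast h1, getLast?_eq_getLast h2] at h
  exact Option.some.inj h


lemma head_eq_of_head?_eq {l₁ l₂ : List R} (h1 : l₁ ≠ []) (h2 : l₂ ≠ [])
    (h : l₁.head? = l₂.head?) : l₁.head h1 = l₂.head h2 := by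
  rw [head?_eq_head h1, head?_eq_head h2] at h
  exact Option.some.inj h

lemma head?_append_cons (t : List R) (c : R) (d : List R) :
    (t ++ c :: d).head? = (t ++ [c]).head? := by
  cases t <;> simp

lemma head_append_cons (t : List R) (c : R) (d : List R) :
    (t ++ c :: d).head (by simp) = (t ++ [c]).head (by simp) := by
  cases t <;> simp

lemma getLast?_append_cons (t : List R) (c : R) (d : List R) :
    (t ++ c :: d).getLast? = (c :: d).getLast? := by
  rw [getLast?_append, getLast?_eq_getLast (cons_ne_nil c d)]
  rfl

lemma getLast_append_cons (t : List R) (c : R) (d : List R) :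
    (t ++ c :: d).getLast (by simp) = (c :: d).getLast (cons_ne_nil c d) :=
  getLast_eq_of_getLast?_eq _ _ (getLast?_append_cons t c d)

lemma mem_tail_snd {r : R → R → Prop} {l : List R} (h : IsChain r l) {x : R}
    (hx : x ∈ l.tail) : ∃ y ∈ l, r y x := by
  obtain ⟨i, hi, hget⟩ := List.mem_iff_getElem.1 hx
  rw [List.getElem_tail] at hget
  have hi' : i < l.length - 1 := by
    have := l.length_tail ▸ hi; omega
  have := List.isChain_iff_getElem.1 h i (by omega)
  rw [hget] at this
  exact ⟨l[i], List.getElem_mem _, this⟩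

lemma mem_dropLast_fst {r : R → R → Prop} {l : List R} (h : IsChain r l) {x : R}
    (hx : x ∈ l.dropLast) : ∃ y ∈ l, r x y := by
  obtain ⟨i, hi, hget⟩ := List.mem_iff_getElem.1 hx
  rw [List.getElem_dropLast] at hget
  have hi' : i < l.length - 1 := by
    have := l.length_dropLast ▸ hi; omega
  have := List.isChain_iff_getElem.1 h i (by omega)
  rw [hget] at this
  exact ⟨l[i+1], List.getElem_mem _, this⟩

lemma mem_of_mem_dropLast {l : List R} {x : R} (hx : x ∈ l.dropLast) : x ∈ l :=
  (List.dropLast_sublist l).subset hx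

/-- chain' can be strengthened using membership of both endpoints -/
lemma chain'_mem {r r' : R → R → Prop} :
    ∀ {l : List R}, IsChain r l → (∀ x ∈ l, ∀ y ∈ l, r x y → r' x y) → IsChain r' l := by
  intro l
  induction l with
  | nil => intro _ _; exact isChain_nil
  | cons a t ih =>
    intro h hmem
    rw [isChain_cons] at h ⊢
    refine ⟨fun y hy => hmem a (by simp) y (mem_cons_of_mem a (mem_of_mem_head? hy)) (h.1 y hy),
      ih h.2 fun x hx y hy => hmem x (by simp [hx]) y (by simp [hy])⟩

/-- a chain walk contains a nodup chain walk with the same endpoints -/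
lemma chain'_to_nodup {r : R → R → Prop} :
    ∀ (n : ℕ) (l : List R), l.length ≤ n → l ≠ [] → l.IsChain r →
    ∃ l' : List R, l' ≠ [] ∧ l'.IsChain r ∧ l'.Nodup ∧ l'.head? = l.head? ∧
      l'.getLast? = l.getLast? ∧ ∀ x ∈ l', x ∈ l := by
  intro n
  induction n with
  | zero =>
    intro l hl hne _
    cases l with
    | nil => exact absurd rfl hne
    | cons a t => simp at hl
  | succ n ih =>
    intro l hl hne hch
    by_cases hnd : l.Nodup
    · exact ⟨l, hne, hch, hnd, rfl, rfl, fun x hx => hx⟩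
    · -- find a duplicate decomposition
      have hdec : ∃ t a m s, l = t ++ a :: (m ++ a :: s) := by
        clear hl hne hch
        induction l with
        | nil => exact absurd nodup_nil hnd
        | cons a t ih2 =>
          by_cases hat : a ∈ t
          · obtain ⟨m, s, rfl⟩ := List.append_of_mem hat
            exact ⟨[], a, m, s, by simp⟩
          · have : ¬ t.Nodup := fun h => hnd (nodup_cons.2 ⟨hat, h⟩)
            obtain ⟨t', a', m, s, rfl⟩ := ih2 this
            exact ⟨a :: t', a', m, s, by simp⟩
      obtain ⟨t, a, m, s, rfl⟩ := hdec
      set l₂ := t ++ a :: s with hl₂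
      have hlen : l₂.length ≤ n := by
        simp only [hl₂, length_append, length_cons] at hl ⊢
        omega
      have hch₂ : l₂.IsChain r := by
        have h1 : IsChain r (t ++ [a]) := hch.prefix ⟨m ++ a :: s, by simp⟩
        have h2 : IsChain r (a :: s) := hch.suffix ⟨t ++ a :: m, by simp⟩
        exact chain'_glue h1 h2
      obtain ⟨l', h1, h2, h3, h4, h5, h6⟩ := ih l₂ hlen (by simp [hl₂]) hch₂
      refine ⟨l', h1, h2, h3, ?_, ?_, ?_⟩
      · rw [h4]; cases t <;> simp [hl₂]
      · rw [h5, hl₂, getLast?_append_cons,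
          show t ++ a :: (m ++ a :: s) = (t ++ a :: m) ++ a :: s by simp,
          getLast?_append_cons]
      · intro x hx
        have := h6 x hx
        simp only [hl₂, mem_append, mem_cons] at this ⊢
        tauto


section Core
variable [DecidableEq R] [Fintype R]

def Rel (E : Finset (R × R)) : R → R → Prop := fun a b => (a, b) ∈ E

def IsWk (E : Finset (R × R)) (X Y : Finset R) (l : List R) : Prop :=
  ∃ h : l ≠ [], l.IsChain (Rel E) ∧ l.head h ∈ X ∧ l.getLast h ∈ Y

def Sep (E : Finset (R × R)) (X Y S : Finset R) : Prop :=
  ∀ l, IsWk E X Y l → ∃ x ∈ l, x ∈ S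

noncomputable def minSep (E : Finset (R × R)) (X Y : Finset R) : ℕ :=
  sInf {n | ∃ S : Finset R, Sep E X Y S ∧ S.card = n}

lemma sep_univ (E : Finset (R × R)) (X Y : Finset R) : Sep E X Y (Finset.univ) := by
  rintro l ⟨h, -, -, -⟩
  exact ⟨l.head h, List.head_mem h, Finset.mem_univ _⟩

lemma minSep_le {E : Finset (R × R)} {X Y S : Finset R} (h : Sep E X Y S) :
    minSep E X Y ≤ S.card := Nat.sInf_le ⟨S, h, rfl⟩

lemma exists_minSep (E : Finset (R × R)) (X Y : Finset R) :
    ∃ S : Finset R, Sep E X Y S ∧ S.card = minSep E X Y := by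
  have hne : {n | ∃ S : Finset R, Sep E X Y S ∧ S.card = n}.Nonempty :=
    by exact ⟨(Finset.univ : Finset R).card, Finset.univ, sep_univ E X Y, rfl⟩
  have h : minSep E X Y ∈ {n | ∃ S : Finset R, Sep E X Y S ∧ S.card = n} :=
    Nat.sInf_mem hne
  obtain ⟨S, hS, hc⟩ := h
  exact ⟨S, hS, hc⟩

lemma le_minSep {E : Finset (R × R)} {X Y : Finset R} {n : ℕ}
    (h : ∀ S : Finset R, Sep E X Y S → n ≤ S.card) : n ≤ minSep E X Y := by
  apply le_csInf (by exact ⟨(Finset.univ : Finset R).card, Finset.univ, sep_univ E X Y, rfl⟩)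
  rintro m ⟨S, hS, rfl⟩
  exact h S hS

lemma wk_mono {E₁ E₂ : Finset (R × R)} {X Y : Finset R} {l : List R} (hE : E₁ ⊆ E₂)
    (h : IsWk E₁ X Y l) : IsWk E₂ X Y l := by
  obtain ⟨hne, hch, hX, hY⟩ := h
  exact ⟨hne, hch.imp (fun a b hab => hE hab), hX, hY⟩

lemma minSep_mono {E₁ E₂ : Finset (R × R)} (X Y : Finset R) (hE : E₁ ⊆ E₂) :
    minSep E₁ X Y ≤ minSep E₂ X Y := by
  obtain ⟨S, hS, hc⟩ := exists_minSep E₂ X Y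
  exact hc ▸ minSep_le (fun l hl => hS l (wk_mono hE hl))

lemma chain'_erase_fst {E : Finset (R × R)} {e : R × R} {l : List R}
    (h : IsChain (Rel E) l) (ha : e.1 ∉ l.dropLast) : IsChain (Rel (E.erase e)) l := by
  rw [isChain_iff_getElem] at h ⊢
  intro i hi
  refine Finset.mem_erase.2 ⟨?_, h i hi⟩
  intro hc
  apply ha
  have h1 : i < l.dropLast.length := by rw [List.length_dropLast]; omega
  have h2 : l.dropLast[i] = l[i] := List.getElem_dropLast h1
  have : e.1 = l[i] := by rw [← hc]
  rw [this, ← h2]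
  exact List.getElem_mem h1

lemma chain'_erase_snd {E : Finset (R × R)} {e : R × R} {l : List R}
    (h : IsChain (Rel E) l) (hb : e.2 ∉ l.tail) : IsChain (Rel (E.erase e)) l := by
  rw [isChain_iff_getElem] at h ⊢
  intro i hi
  refine Finset.mem_erase.2 ⟨?_, h i hi⟩
  intro hc
  apply hb
  have h1 : i < l.tail.length := by rw [List.length_tail]; omega
  have h2 : l.tail[i] = l[i + 1] := List.getElem_tail h1
  have : e.2 = l[i + 1] := by rw [← hc]
  rw [this, ← h2]
  exact List.getElem_mem h1

lemma goring_empty (X Y : Finset R) :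
    ∃ F : Fin (minSep (∅ : Finset (R × R)) X Y) → List R,
      (∀ i, IsWk ∅ X Y (F i) ∧ (F i).Nodup) ∧
      ∀ i j, i ≠ j → ∀ x, x ∈ F i → x ∉ F j := by
  have hwk : ∀ l, IsWk (∅ : Finset (R × R)) X Y l → ∃ x, l = [x] ∧ x ∈ X ∩ Y := by
    rintro l ⟨hne, hch, hX, hY⟩
    match l with
    | [x] => exact ⟨x, rfl, Finset.mem_inter.2 ⟨hX, hY⟩⟩
    | x :: y :: t =>
      exfalso
      have := (List.isChain_cons_cons.1 hch).1
      simp [Rel] at this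
  have hsing : ∀ x ∈ X ∩ Y, IsWk (∅ : Finset (R × R)) X Y [x] := by
    intro x hx
    exact ⟨by simp, List.isChain_singleton x,
      (Finset.mem_inter.1 hx).1, (Finset.mem_inter.1 hx).2⟩
  have hms : minSep (∅ : Finset (R × R)) X Y = (X ∩ Y).card := by
    apply _root_.le_antisymm
    · apply minSep_le
      intro l hl
      obtain ⟨x, rfl, hx⟩ := hwk l hl
      exact ⟨x, by simp, hx⟩
    · apply le_minSep
      intro S hS
      apply Finset.card_le_card
      intro x hx
      obtain ⟨z, hz, hzS⟩ := hS [x] (hsing x hx)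
      simp at hz
      exact hz ▸ hzS
  refine ⟨fun i => [((X ∩ Y).equivFin.symm (Fin.cast hms i) : R)], ?_, ?_⟩
  · intro i
    exact ⟨hsing _ ((X ∩ Y).equivFin.symm (Fin.cast hms i)).2, by simp⟩
  · intro i j hij x hx hx'
    simp at hx hx'
    apply hij
    have := hx ▸ hx'
    have h2 := Subtype.ext this.symm
    have h3 := (X ∩ Y).equivFin.symm.injective h2
    exact (Fin.cast_injective _ h3).symm

theorem goring : ∀ (N : ℕ) (E : Finset (R × R)), E.card ≤ N → (∀ p ∈ E, p.1 ≠ p.2) →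
    ∀ (X Y : Finset R),
    ∃ F : Fin (minSep E X Y) → List R, (∀ i, IsWk E X Y (F i) ∧ (F i).Nodup) ∧
      ∀ i j, i ≠ j → ∀ x, x ∈ F i → x ∉ F j := by
  intro N
  induction N with
  | zero =>
    intro E hcard _ X Y
    have hE0 : E = ∅ := Finset.card_eq_zero.1 (Nat.le_zero.1 hcard)
    subst hE0
    exact goring_empty X Y
  | succ N IH =>
    intro E hcard hloop X Y
    rcases Finset.eq_empty_or_nonempty E with rfl | ⟨e, he⟩
    · exact goring_empty X Y
    obtain ⟨a, b⟩ := e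
    have hab : a ≠ b := hloop (a, b) he
    set E' := E.erase (a, b) with hE'def
    have hsub : E' ⊆ E := Finset.erase_subset _ _
    have hloop' : ∀ p ∈ E', p.1 ≠ p.2 := fun p hp => hloop p (hsub hp)
    have hcard' : E'.card ≤ N := by
      have h1 : E'.card = E.card - 1 := Finset.card_erase_of_mem he
      have hpos : 0 < E.card := Finset.card_pos.2 ⟨_, he⟩
      omega
    have hle : minSep E' X Y ≤ minSep E X Y := minSep_mono X Y hsub
    by_cases heq : minSep E' X Y = minSep E X Y
    · obtain ⟨F, hF, hdisj⟩ := IH E' hcard' hloop' X Y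
      refine ⟨F ∘ Fin.cast heq.symm, fun i => ⟨wk_mono hsub (hF _).1, (hF _).2⟩, ?_⟩
      intro i j hij x hx hx'
      exact hdisj _ _ (fun h => hij (Fin.cast_injective _ h)) x hx hx'
    have hlt : minSep E' X Y < minSep E X Y := lt_of_le_of_ne hle heq
    obtain ⟨S, hS, hScard⟩ := exists_minSep E' X Y
    have hSlt : S.card < minSep E X Y := by omega
    have hSepa : Sep E X Y (insert a S) := by
      intro l hl
      by_cases hal : a ∈ l
      · exact ⟨a, hal, Finset.mem_insert_self _ _⟩
      obtain ⟨hne, hch, hX, hY⟩ := hl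
      have hch' : IsChain (Rel E') l :=
        chain'_erase_fst hch (fun h => hal (mem_of_mem_dropLast h))
      obtain ⟨x, hx, hxS⟩ := hS l ⟨hne, hch', hX, hY⟩
      exact ⟨x, hx, Finset.mem_insert_of_mem hxS⟩
    have hSepb : Sep E X Y (insert b S) := by
      intro l hl
      by_cases hbl : b ∈ l
      · exact ⟨b, hbl, Finset.mem_insert_self _ _⟩
      obtain ⟨hne, hch, hX, hY⟩ := hl
      have hch' : IsChain (Rel E') l :=
        chain'_erase_snd hch (fun h => hbl (List.mem_of_mem_tail h))
      obtain ⟨x, hx, hxS⟩ := hS l ⟨hne, hch', hX, hY⟩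
      exact ⟨x, hx, Finset.mem_insert_of_mem hxS⟩
    have haS : a ∉ S := by
      intro h
      have h1 := minSep_le hSepa
      rw [Finset.insert_eq_self.2 h] at h1
      omega
    have hbS : b ∉ S := by
      intro h
      have h1 := minSep_le hSepb
      rw [Finset.insert_eq_self.2 h] at h1
      omega
    have hk : S.card + 1 = minSep E X Y := by
      have h1 := minSep_le hSepa
      have h2 := Finset.card_insert_le a S
      omega
    set k := minSep E X Y with hkdef
    set Y₁ := insert a S with hY₁def
    set X₂ := insert b S with hX₂def
    have hY₁card : Y₁.card = k := by rw [hY₁def, Finset.card_insert_of_notMem haS]; omega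
    have hX₂card : X₂.card = k := by rw [hX₂def, Finset.card_insert_of_notMem hbS]; omega
    have haY₁ : a ∈ Y₁ := Finset.mem_insert_self _ _
    have hbX₂ : b ∈ X₂ := Finset.mem_insert_self _ _
    have hminY₁ : minSep E' X Y₁ = k := by
      apply _root_.le_antisymm
      · have hsep : Sep E' X Y₁ Y₁ := by
          rintro l ⟨hne, -, -, hY⟩
          exact ⟨l.getLast hne, List.getLast_mem hne, hY⟩
        have := minSep_le hsep
        omega
      · apply le_minSep
        intro T hT
        have hTsep : Sep E X Y T := by
          intro l hl
          obtain ⟨hne, hch, hX, hY⟩ := hl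
          by_cases hal : a ∈ l
          · obtain ⟨t, c, d, hsplit, hc, ht⟩ := exists_first_split (· = a) ⟨a, hal, rfl⟩
            have hca : c = a := hc
            subst hca
            have hqpre : t ++ [c] <+: l := ⟨d, by rw [hsplit]; simp⟩
            have hchq : IsChain (Rel E') (t ++ [c]) := by
              apply chain'_erase_fst (hch.prefix hqpre)
              rw [List.dropLast_concat]
              exact fun h => ht c h rfl
            have hhd : (t ++ [c]).head (by simp) ∈ X := by
              have heq2 : (t ++ [c]).head (by simp) = l.head hne :=
                head_eq_of_head?_eq _ _ (by rw [hsplit]; exact (head?_append_cons _ _ _).symm)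
              rw [heq2]; exact hX
            have hwkq : IsWk E' X Y₁ (t ++ [c]) := by
              refine ⟨by simp, hchq, hhd, ?_⟩
              rw [List.getLast_concat]; exact haY₁
            obtain ⟨x, hx, hxT⟩ := hT _ hwkq
            exact ⟨x, hqpre.sublist.subset hx, hxT⟩
          · have hch' : IsChain (Rel E') l :=
              chain'_erase_fst hch (fun h => hal (mem_of_mem_dropLast h))
            obtain ⟨s, hsl, hsS⟩ := hS l ⟨hne, hch', hX, hY⟩
            obtain ⟨t, c, d, hsplit, hc, ht⟩ :=
              exists_first_split (· ∈ Y₁) ⟨s, hsl, Finset.mem_insert_of_mem hsS⟩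
            have hqpre : t ++ [c] <+: l := ⟨d, by rw [hsplit]; simp⟩
            have hhd : (t ++ [c]).head (by simp) ∈ X := by
              have heq2 : (t ++ [c]).head (by simp) = l.head hne :=
                head_eq_of_head?_eq _ _ (by rw [hsplit]; exact (head?_append_cons _ _ _).symm)
              rw [heq2]; exact hX
            have hwkq : IsWk E' X Y₁ (t ++ [c]) := by
              refine ⟨by simp, hch'.prefix hqpre, hhd, ?_⟩
              rw [List.getLast_concat]; exact hc
            obtain ⟨x, hx, hxT⟩ := hT _ hwkq
            exact ⟨x, hqpre.sublist.subset hx, hxT⟩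
        have := minSep_le hTsep
        omega
    have hminX₂ : minSep E' X₂ Y = k := by
      apply _root_.le_antisymm
      · have hsep : Sep E' X₂ Y X₂ := by
          rintro l ⟨hne, -, hX, -⟩
          exact ⟨l.head hne, List.head_mem hne, hX⟩
        have := minSep_le hsep
        omega
      · apply le_minSep
        intro T hT
        have hTsep : Sep E X Y T := by
          intro l hl
          obtain ⟨hne, hch, hX, hY⟩ := hl
          by_cases hbl : b ∈ l
          · obtain ⟨t, c, d, hsplit, hc, hd⟩ := exists_last_split (· = b) ⟨b, hbl, rfl⟩
            have hcb : c = b := hc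
            subst hcb
            have hqsuf : c :: d <:+ l := ⟨t, (hsplit).symm⟩
            have hchq : IsChain (Rel E') (c :: d) := by
              apply chain'_erase_snd (hch.suffix hqsuf)
              exact fun h => hd c h rfl
            have hlst : (c :: d).getLast (by simp) ∈ Y := by
              have heq2 : (c :: d).getLast (by simp) = l.getLast hne :=
                getLast_eq_of_getLast?_eq _ _ (by rw [hsplit]; exact (getLast?_append_cons _ _ _).symm)
              rw [heq2]; exact hY
            have hwkq : IsWk E' X₂ Y (c :: d) := ⟨by simp, hchq, hbX₂, hlst⟩
            obtain ⟨x, hx, hxT⟩ := hT _ hwkq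
            exact ⟨x, hqsuf.sublist.subset hx, hxT⟩
          · have hch' : IsChain (Rel E') l :=
              chain'_erase_snd hch (fun h => hbl (List.mem_of_mem_tail h))
            obtain ⟨s, hsl, hsS⟩ := hS l ⟨hne, hch', hX, hY⟩
            obtain ⟨t, c, d, hsplit, hc, hd⟩ :=
              exists_last_split (· ∈ X₂) ⟨s, hsl, Finset.mem_insert_of_mem hsS⟩
            have hqsuf : c :: d <:+ l := ⟨t, (hsplit).symm⟩
            have hlst : (c :: d).getLast (by simp) ∈ Y := by
              have heq2 : (c :: d).getLast (by simp) = l.getLast hne :=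
                getLast_eq_of_getLast?_eq _ _ (by rw [hsplit]; exact (getLast?_append_cons _ _ _).symm)
              rw [heq2]; exact hY
            have hwkq : IsWk E' X₂ Y (c :: d) := ⟨by simp, hch'.suffix hqsuf, hc, hlst⟩
            obtain ⟨x, hx, hxT⟩ := hT _ hwkq
            exact ⟨x, hqsuf.sublist.subset hx, hxT⟩
        have := minSep_le hTsep
        omega
    obtain ⟨F₁', hF₁', hd₁'⟩ := IH E' hcard' hloop' X Y₁
    obtain ⟨F₂', hF₂', hd₂'⟩ := IH E' hcard' hloop' X₂ Y
    set F₁ : Fin k → List R := F₁' ∘ Fin.cast hminY₁.symm with hF₁def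
    set F₂ : Fin k → List R := F₂' ∘ Fin.cast hminX₂.symm with hF₂def
    have hF₁ : ∀ i, IsWk E' X Y₁ (F₁ i) ∧ (F₁ i).Nodup := fun i => hF₁' _
    have hF₂ : ∀ i, IsWk E' X₂ Y (F₂ i) ∧ (F₂ i).Nodup := fun i => hF₂' _
    have hd₁ : ∀ i j, i ≠ j → ∀ x, x ∈ F₁ i → x ∉ F₁ j :=
      fun i j hij => hd₁' _ _ (fun h => hij (Fin.cast_injective _ h))
    have hd₂ : ∀ i j, i ≠ j → ∀ x, x ∈ F₂ i → x ∉ F₂ j :=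
      fun i j hij => hd₂' _ _ (fun h => hij (Fin.cast_injective _ h))
    have hsplit1 : ∀ i : Fin k, ∃ t c, ∃ d : List R,
        F₁ i = t ++ c :: d ∧ c ∈ Y₁ ∧ ∀ x ∈ t, x ∉ Y₁ := by
      intro i
      obtain ⟨⟨hne, hch, hX, hY⟩, hnd⟩ := hF₁ i
      obtain ⟨t, c, d, hs, hc, ht⟩ :=
        exists_first_split (· ∈ Y₁) ⟨(F₁ i).getLast hne, List.getLast_mem hne, hY⟩
      exact ⟨t, c, d, hs, hc, ht⟩
    choose t₁ c₁ d₁ hsp1 hc1 ht1 using hsplit1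
    have hsplit2 : ∀ j : Fin k, ∃ t c, ∃ d : List R,
        F₂ j = t ++ c :: d ∧ c ∈ X₂ ∧ ∀ x ∈ d, x ∉ X₂ := by
      intro j
      obtain ⟨⟨hne, hch, hX, hY⟩, hnd⟩ := hF₂ j
      obtain ⟨t, c, d, hs, hc, hd⟩ :=
        exists_last_split (· ∈ X₂) ⟨(F₂ j).head hne, List.head_mem hne, hX⟩
      exact ⟨t, c, d, hs, hc, hd⟩
    choose t₂ c₂ d₂ hsp2 hc2 hd2 using hsplit2
    have hG₁sub : ∀ (i : Fin k) (x : R), x ∈ t₁ i ++ [c₁ i] → x ∈ F₁ i := by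
      intro i x hx
      rw [hsp1 i]
      rcases List.mem_append.1 hx with h | h
      · exact List.mem_append.2 (Or.inl h)
      · simp only [List.mem_singleton] at h
        subst h
        exact List.mem_append.2 (Or.inr (List.mem_cons_self))
    have hG₂sub : ∀ (j : Fin k) (x : R), x ∈ c₂ j :: d₂ j → x ∈ F₂ j := by
      intro j x hx
      rw [hsp2 j]
      exact List.mem_append.2 (Or.inr hx)
    have hG₁chain : ∀ i, IsChain (Rel E') (t₁ i ++ [c₁ i]) := by
      intro i
      obtain ⟨⟨hne, hch, -, -⟩, -⟩ := hF₁ i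
      exact hch.prefix ⟨d₁ i, by rw [hsp1 i]; simp⟩
    have hG₂chain : ∀ j, IsChain (Rel E') (c₂ j :: d₂ j) := by
      intro j
      obtain ⟨⟨hne, hch, -, -⟩, -⟩ := hF₂ j
      exact hch.suffix ⟨t₂ j, (hsp2 j).symm⟩
    have hG₁nd : ∀ i, (t₁ i ++ [c₁ i]).Nodup := by
      intro i
      have hnd := (hF₁ i).2
      rw [hsp1 i] at hnd
      exact List.Nodup.sublist (List.IsPrefix.sublist ⟨d₁ i, by simp⟩) hnd
    have hG₂nd : ∀ j, (c₂ j :: d₂ j).Nodup := by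
      intro j
      have hnd := (hF₂ j).2
      rw [hsp2 j] at hnd
      exact List.Nodup.sublist (List.IsSuffix.sublist ⟨t₂ j, rfl⟩) hnd
    have hG₁X : ∀ i, (t₁ i ++ [c₁ i]).head (by simp) ∈ X := by
      intro i
      obtain ⟨⟨hne, hch, hX, hY⟩, -⟩ := hF₁ i
      have heq2 : (t₁ i ++ [c₁ i]).head (by simp) = (F₁ i).head hne :=
        head_eq_of_head?_eq _ _ (by rw [hsp1 i]; exact (head?_append_cons _ _ _).symm)
      rw [heq2]; exact hX
    have hG₂Y : ∀ j, (c₂ j :: d₂ j).getLast (by simp) ∈ Y := by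
      intro j
      obtain ⟨⟨hne, hch, hX, hY⟩, -⟩ := hF₂ j
      have heq2 : (c₂ j :: d₂ j).getLast (by simp) = (F₂ j).getLast hne :=
        getLast_eq_of_getLast?_eq _ _ (by rw [hsp2 j]; exact (getLast?_append_cons _ _ _).symm)
      rw [heq2]; exact hY
    have hc1mem : ∀ i, c₁ i ∈ F₁ i := fun i => hG₁sub i _ (by simp)
    have hc2mem : ∀ j, c₂ j ∈ F₂ j := fun j => hG₂sub j _ (by simp)
    have hc1inj : Function.Injective c₁ := by
      intro i j h
      by_contra hij
      exact hd₁ i j hij _ (hc1mem i) (h ▸ hc1mem j)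
    have hc2inj : Function.Injective c₂ := by
      intro i j h
      by_contra hij
      exact hd₂ i j hij _ (hc2mem i) (h ▸ hc2mem j)
    have himg2 : ∀ y ∈ X₂, ∃ j, c₂ j = y := by
      intro y hy
      have hsub' : Finset.univ.image c₂ ⊆ X₂ := by
        intro z hz
        obtain ⟨j, -, rfl⟩ := Finset.mem_image.1 hz
        exact hc2 j
      have hcardim : (Finset.univ.image c₂).card = k := by
        rw [Finset.card_image_of_injective _ hc2inj, Finset.card_univ, Fintype.card_fin]
      have himgeq : Finset.univ.image c₂ = X₂ :=
        Finset.eq_of_subset_of_card_le hsub' (by omega)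
      rw [← himgeq] at hy
      obtain ⟨j, -, hj⟩ := Finset.mem_image.1 hy
      exact ⟨j, hj⟩
    have hτ : ∀ i : Fin k, (if c₁ i = a then b else c₁ i) ∈ X₂ := by
      intro i
      by_cases h : c₁ i = a
      · rw [if_pos h]; exact hbX₂
      · rw [if_neg h]
        rcases Finset.mem_insert.1 (hc1 i) with h' | h'
        · exact absurd h' h
        · exact Finset.mem_insert_of_mem h'
    have hσex : ∀ i : Fin k, ∃ j, c₂ j = (if c₁ i = a then b else c₁ i) :=
      fun i => himg2 _ (hτ i)
    choose σ hσ using hσex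
    have hτinj : ∀ i j : Fin k,
        (if c₁ i = a then b else c₁ i) = (if c₁ j = a then b else c₁ j) → i = j := by
      intro i j h
      by_cases hi : c₁ i = a <;> by_cases hj : c₁ j = a
      · exact hc1inj (hi.trans hj.symm)
      · rw [if_pos hi, if_neg hj] at h
        rcases Finset.mem_insert.1 (hc1 j) with h' | h'
        · exact absurd h' hj
        · exact absurd (h ▸ h') hbS
      · rw [if_neg hi, if_pos hj] at h
        rcases Finset.mem_insert.1 (hc1 i) with h' | h'
        · exact absurd h' hi
        · exact absurd (h ▸ h') hbS
      · rw [if_neg hi, if_neg hj] at h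
        exact hc1inj h
    have hσinj : Function.Injective σ := by
      intro i j h
      apply hτinj
      rw [← hσ i, ← hσ j, h]
    have hkey : ∀ (i j : Fin k) (x : R), x ∈ t₁ i ++ [c₁ i] → x ∈ c₂ j :: d₂ j →
        x ∈ S ∧ x = c₁ i ∧ x = c₂ j := by
      intro i j x hx1 hx2
      by_cases hxS : x ∈ S
      · refine ⟨hxS, ?_, ?_⟩
        · rcases List.mem_append.1 hx1 with h | h
          · exact absurd (Finset.mem_insert_of_mem hxS) (ht1 i x h)
          · simpa using h
        · rcases List.mem_cons.1 hx2 with h | h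
          · exact h
          · exact absurd (Finset.mem_insert_of_mem hxS) (hd2 j x h)
      · exfalso
        obtain ⟨p₁, q₁, h1⟩ := List.append_of_mem hx1
        obtain ⟨p₂, q₂, h2⟩ := List.append_of_mem hx2
        have hch1 : IsChain (Rel E') (p₁ ++ [x]) :=
          (hG₁chain i).prefix ⟨q₁, by rw [h1]; simp⟩
        have hch2 : IsChain (Rel E') (x :: q₂) :=
          (hG₂chain j).suffix ⟨p₂, h2.symm⟩
        have hchw : IsChain (Rel E') (p₁ ++ x :: q₂) := chain'_glue hch1 hch2
        have hhead : (p₁ ++ x :: q₂).head (by simp) ∈ X := by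
          have heq2 : (p₁ ++ x :: q₂).head (by simp) = (t₁ i ++ [c₁ i]).head (by simp) :=
            head_eq_of_head?_eq _ _
              (by rw [head?_append_cons p₁ x q₂, ← head?_append_cons p₁ x q₁, ← h1])
          rw [heq2]; exact hG₁X i
        have hlast : (p₁ ++ x :: q₂).getLast (by simp) ∈ Y := by
          have heq2 : (p₁ ++ x :: q₂).getLast (by simp) = (c₂ j :: d₂ j).getLast (by simp) :=
            getLast_eq_of_getLast?_eq _ _
              (by rw [getLast?_append_cons p₁ x q₂, ← getLast?_append_cons p₂ x q₂, ← h2])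
          rw [heq2]; exact hG₂Y j
        obtain ⟨z, hz, hzS⟩ := hS _ ⟨by simp, hchw, hhead, hlast⟩
        rcases List.mem_append.1 hz with h | h
        · have hzt : z ∈ t₁ i := by
            have hmem : z ∈ (p₁ ++ x :: q₁).dropLast := by
              rw [List.dropLast_append_of_ne_nil (by simp : (x :: q₁ : List R) ≠ [])]
              exact List.mem_append.2 (Or.inl h)
            rw [← h1, List.dropLast_concat] at hmem
            exact hmem
          exact ht1 i z hzt (Finset.mem_insert_of_mem hzS)
        · rcases List.mem_cons.1 h with rfl | h
          · exact hxS hzS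
          · have hzd : z ∈ d₂ j := by
              rcases p₂ with _ | ⟨p, ps⟩
            -- p₂ = []
              · simp only [List.nil_append] at h2
                injection h2 with h2a h2b
                rw [h2b]; exact h
              · have h2' := h2
                simp only [List.cons_append] at h2'
                injection h2' with h2a h2b
                rw [h2b]
                exact List.mem_append.2 (Or.inr (List.mem_cons_of_mem _ h))
            exact hd2 j z hzd (Finset.mem_insert_of_mem hzS)
    -- glued family
    refine ⟨fun i => if c₁ i = a then (t₁ i ++ [c₁ i]) ++ (c₂ (σ i) :: d₂ (σ i))
      else (t₁ i ++ [c₁ i]) ++ d₂ (σ i), ?_, ?_⟩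
    · intro i
      dsimp only
      by_cases hia : c₁ i = a
      · rw [if_pos hia]
        have hb2 : c₂ (σ i) = b := by rw [hσ i, if_pos hia]
        have hchH : IsChain (Rel E) ((t₁ i ++ [c₁ i]) ++ (c₂ (σ i) :: d₂ (σ i))) := by
          have hLeq : (t₁ i ++ [c₁ i]) ++ (c₂ (σ i) :: d₂ (σ i))
              = t₁ i ++ c₁ i :: (c₂ (σ i) :: d₂ (σ i)) := by simp
          rw [hLeq]
          apply chain'_glue
          · exact (hG₁chain i).imp (fun _ _ hxy => hsub hxy)
          · rw [List.isChain_cons_cons]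
            constructor
            · show (c₁ i, c₂ (σ i)) ∈ E
              rw [hia, hb2]; exact he
            · exact (hG₂chain (σ i)).imp (fun _ _ hxy => hsub hxy)
        have hhd : ((t₁ i ++ [c₁ i]) ++ (c₂ (σ i) :: d₂ (σ i))).head (by simp) ∈ X := by
          have heq2 : ((t₁ i ++ [c₁ i]) ++ (c₂ (σ i) :: d₂ (σ i))).head (by simp)
              = (t₁ i ++ [c₁ i]).head (by simp) :=
            head_eq_of_head?_eq _ _ (by rw [List.head?_append_of_ne_nil _ (by simp)])
          rw [heq2]; exact hG₁X i
        have hlst : ((t₁ i ++ [c₁ i]) ++ (c₂ (σ i) :: d₂ (σ i))).getLast (by simp) ∈ Y := by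
          have heq2 : ((t₁ i ++ [c₁ i]) ++ (c₂ (σ i) :: d₂ (σ i))).getLast (by simp)
              = (c₂ (σ i) :: d₂ (σ i)).getLast (by simp) :=
            getLast_eq_of_getLast?_eq _ _ (getLast?_append_cons _ _ _)
          rw [heq2]; exact hG₂Y (σ i)
        refine ⟨⟨by simp, hchH, hhd, hlst⟩, ?_⟩
        rw [List.nodup_append]
        refine ⟨hG₁nd i, hG₂nd (σ i), ?_⟩
        intro x hx1 y hx2 hxy
        subst hxy
        obtain ⟨-, hxc1, hxc2⟩ := hkey i (σ i) x hx1 hx2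
        rw [hxc2, hb2] at hxc1
        exact hab (hia ▸ hxc1.symm)
      · rw [if_neg hia]
        have hb2 : c₂ (σ i) = c₁ i := by rw [hσ i, if_neg hia]
        have hchH : IsChain (Rel E) ((t₁ i ++ [c₁ i]) ++ d₂ (σ i)) := by
          have hLeq : (t₁ i ++ [c₁ i]) ++ d₂ (σ i) = t₁ i ++ c₁ i :: d₂ (σ i) := by simp
          rw [hLeq]
          apply chain'_glue
          · exact (hG₁chain i).imp (fun _ _ hxy => hsub hxy)
          · have := (hG₂chain (σ i)).imp (fun _ _ hxy => (hsub hxy : Rel E _ _))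
            rw [hb2] at this
            exact this
        have hhd : ((t₁ i ++ [c₁ i]) ++ d₂ (σ i)).head (by simp) ∈ X := by
          have heq2 : ((t₁ i ++ [c₁ i]) ++ d₂ (σ i)).head (by simp)
              = (t₁ i ++ [c₁ i]).head (by simp) :=
            head_eq_of_head?_eq _ _ (by rw [List.head?_append_of_ne_nil _ (by simp)])
          rw [heq2]; exact hG₁X i
        have hlst : ((t₁ i ++ [c₁ i]) ++ d₂ (σ i)).getLast (by simp) ∈ Y := by
          have heq2 : ((t₁ i ++ [c₁ i]) ++ d₂ (σ i)).getLast (by simp)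
              = (c₂ (σ i) :: d₂ (σ i)).getLast (by simp) := by
            apply getLast_eq_of_getLast?_eq
            have hLeq : (t₁ i ++ [c₁ i]) ++ d₂ (σ i) = t₁ i ++ c₁ i :: d₂ (σ i) := by simp
            rw [hLeq, getLast?_append_cons, hb2]
          rw [heq2]; exact hG₂Y (σ i)
        refine ⟨⟨by simp, hchH, hhd, hlst⟩, ?_⟩
        rw [List.nodup_append]
        refine ⟨hG₁nd i, (List.nodup_cons.1 (hG₂nd (σ i))).2, ?_⟩
        intro x hx1 y hx2 hxy
        subst hxy
        obtain ⟨-, hxc1, hxc2⟩ := hkey i (σ i) x hx1 (List.mem_cons_of_mem _ hx2)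
        rw [hxc2] at hx2
        exact (List.nodup_cons.1 (hG₂nd (σ i))).1 hx2
    · -- pairwise disjoint
      have hmem : ∀ (i : Fin k) (x : R),
          x ∈ (if c₁ i = a then (t₁ i ++ [c₁ i]) ++ (c₂ (σ i) :: d₂ (σ i))
            else (t₁ i ++ [c₁ i]) ++ d₂ (σ i)) →
          x ∈ t₁ i ++ [c₁ i] ∨ x ∈ c₂ (σ i) :: d₂ (σ i) := by
        intro i x hx
        by_cases h : c₁ i = a
        · rw [if_pos h] at hx
          exact List.mem_append.1 hx
        · rw [if_neg h] at hx
          rcases List.mem_append.1 hx with h' | h'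
          · exact Or.inl h'
          · exact Or.inr (List.mem_cons_of_mem _ h')
      intro i j hij x hx hx'
      have h1 := hmem i x hx
      have h2 := hmem j x hx'
      have hcross : ∀ (i' j' : Fin k), i' ≠ j' →
          x ∈ t₁ i' ++ [c₁ i'] → x ∈ c₂ (σ j') :: d₂ (σ j') → False := by
        intro i' j' hij' hxa hxb
        obtain ⟨hxS, hxc1, hxc2⟩ := hkey i' (σ j') x hxa hxb
        rw [hσ j'] at hxc2
        by_cases hj' : c₁ j' = a
        · rw [if_pos hj'] at hxc2
          exact hbS (hxc2 ▸ hxS)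
        · rw [if_neg hj'] at hxc2
          exact hij' (hc1inj (hxc1.symm.trans hxc2))
      rcases h1 with h1 | h1 <;> rcases h2 with h2 | h2
      · exact hd₁ i j hij x (hG₁sub i x h1) (hG₁sub j x h2)
      · exact hcross i j hij h1 h2
      · exact hcross j i (Ne.symm hij) h2 h1
      · exact hd₂ (σ i) (σ j) (fun h => hij (hσinj h)) x (hG₂sub _ x h1) (hG₂sub _ x h2)

end Core


section Internal
variable [DecidableEq R] [Fintype R]
variable {A : R → R → Prop} {u v : R}

-- the reduced digraph data
def iE (A : R → R → Prop) (u v : R) [DecidableEq R] [Fintype R]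
    [DecidablePred fun p : R × R => A p.1 p.2] : Finset (R × R) :=
  Finset.univ.filter (fun p : R × R =>
    A p.1 p.2 ∧ p.1 ≠ u ∧ p.1 ≠ v ∧ p.2 ≠ u ∧ p.2 ≠ v ∧ p.1 ≠ p.2)

def iX (A : R → R → Prop) (u v : R) [DecidableEq R] [Fintype R]
    [∀ w, Decidable (A u w)] : Finset R :=
  Finset.univ.filter (fun w => A u w ∧ w ≠ u ∧ w ≠ v)

def iY (A : R → R → Prop) (u v : R) [DecidableEq R] [Fintype R]
    [∀ w, Decidable (A w v)] : Finset R :=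
  Finset.univ.filter (fun w => A w v ∧ w ≠ u ∧ w ≠ v)

lemma dipath_decomp (hA : ¬ A u v) (huv : u ≠ v) (P : DiPath A u v) :
    ∃ l : List R, l ≠ [] ∧ P.verts = l ++ [v] := by
  have hvne : P.verts ≠ [] := by
    intro h
    have := P.ends
    rw [h] at this
    simp at this
    exact huv this
  have hlast : P.verts.getLast hvne = v := by
    have := P.ends
    rwa [List.getLast_cons hvne] at this
  refine ⟨P.verts.dropLast, ?_, by
    have h2 := List.dropLast_append_getLast hvne
    rw [hlast] at h2
    exact h2.symm⟩
  intro h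
  have hv2 : P.verts = [v] := by
    conv_lhs => rw [← List.dropLast_append_getLast hvne]
    rw [h, hlast]; rfl
  have := P.chain
  rw [hv2] at this
  exact hA (List.isChain_cons_cons.1 this).1

lemma dipath_interior_iff (P : DiPath A u v) {l : List R} (hl : P.verts = l ++ [v]) :
    ∀ x, x ∈ P.interior ↔ x ∈ l := by
  intro x
  have hnd := P.nodup
  rw [hl] at hnd
  have hvl : v ∉ l := by
    have h2 := (List.nodup_cons.1 hnd).2
    rw [List.nodup_append] at h2
    exact fun h => h2.2.2 v h v (by simp) rfl
  have hul : u ∉ l := by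
    have h1 := (List.nodup_cons.1 hnd).1
    exact fun h => h1 (List.mem_append.2 (Or.inl h))
  constructor
  · rintro ⟨hmem, hxu, hxv⟩
    rw [hl] at hmem
    rcases List.mem_cons.1 hmem with h | h
    · exact absurd h hxu
    · rcases List.mem_append.1 h with h | h
      · exact h
      · simp at h; exact absurd h hxv
  · intro hx
    refine ⟨by rw [hl]; exact List.mem_cons_of_mem _ (List.mem_append.2 (Or.inl hx)), ?_, ?_⟩
    · exact fun h => hul (h ▸ hx)
    · exact fun h => hvl (h ▸ hx)

lemma chain'_strengthen_nodup {r r' : R → R → Prop} {l : List R} (h : IsChain r l)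
    (hnd : l.Nodup) (himp : ∀ x ∈ l, ∀ y ∈ l, x ≠ y → r x y → r' x y) : IsChain r' l := by
  rw [isChain_iff_getElem] at h ⊢
  intro i hi
  have hne : l[i] ≠ l[i + 1] := by
    intro hcon
    have := (hnd.getElem_inj_iff).1 hcon
    omega
  exact himp _ (List.getElem_mem _) _ (List.getElem_mem _) hne (h i hi)

variable [DecidablePred fun p : R × R => A p.1 p.2] [∀ w, Decidable (A u w)]
  [∀ w, Decidable (A w v)]

lemma wk_elem_ne (hA : ¬ A u v) (huv : u ≠ v) {l : List R}
    (hwk : IsWk (iE A u v) (iX A u v) (iY A u v) l) : ∀ x ∈ l, x ≠ u ∧ x ≠ v := by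
  obtain ⟨hne, hch, hX, hY⟩ := hwk
  intro x hx
  rcases l with _ | ⟨h0, t⟩
  · exact absurd rfl hne
  rcases List.mem_cons.1 hx with rfl | hx
  · have := Finset.mem_filter.1 hX
    exact ⟨this.2.2.1, this.2.2.2⟩
  · obtain ⟨y, -, hr⟩ := mem_tail_snd hch (by simpa using hx)
    have := Finset.mem_filter.1 hr
    exact ⟨this.2.2.2.2.1, this.2.2.2.2.2.1⟩

lemma wk_to_dipath (hA : ¬ A u v) (huv : u ≠ v) {l : List R}
    (hwk : IsWk (iE A u v) (iX A u v) (iY A u v) l) (hnd : l.Nodup) :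
    ∃ P : DiPath A u v, P.verts = l ++ [v] := by
  obtain ⟨hne, hch, hX, hY⟩ := hwk
  have hXf := Finset.mem_filter.1 hX
  have hYf := Finset.mem_filter.1 hY
  have helem := wk_elem_ne hA huv ⟨hne, hch, hX, hY⟩
  have hchA : IsChain A l := hch.imp (fun x y h => (Finset.mem_filter.1 h).2.1)
  have hch2 : IsChain A (l ++ [v]) := by
    rw [List.isChain_append]
    refine ⟨hchA, List.isChain_singleton v, ?_⟩
    intro x hx y hy
    simp only [List.head?_cons, Option.mem_def, Option.some.injEq] at hy
    rw [List.getLast?_eq_getLast hne, Option.mem_def, Option.some.injEq] at hx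
    subst hx; subst hy
    exact hYf.2.1
  have hch3 : IsChain A (u :: (l ++ [v])) := by
    rw [List.isChain_cons]
    refine ⟨?_, hch2⟩
    intro y hy
    rw [List.head?_append_of_ne_nil _ hne, head?_eq_head hne, Option.mem_def,
      Option.some.injEq] at hy
    subst hy
    exact hXf.2.1
  have hul : u ∉ l := fun h => (helem u h).1 rfl
  have hvl : v ∉ l := fun h => (helem v h).2 rfl
  refine ⟨⟨l ++ [v], hch3, ?_, ?_⟩, rfl⟩
  · apply getLast_eq_of_getLast?_eq (List.cons_ne_nil _ _) (List.cons_ne_nil v [])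
    rw [show (u :: (l ++ [v])) = (u :: l) ++ [v] by simp, List.getLast?_concat]
    rfl
  · rw [List.nodup_cons, List.nodup_append]
    refine ⟨?_, hnd, by simp, fun x hx y h hxy => hvl (by simp at h; subst h; subst hxy; exact hx)⟩
    intro h
    rcases List.mem_append.1 h with h | h
    · exact hul h
    · simp at h; exact huv h

lemma dipath_to_wk (hA : ¬ A u v) (huv : u ≠ v) (P : DiPath A u v) :
    ∃ l : List R, IsWk (iE A u v) (iX A u v) (iY A u v) l ∧ l.Nodup ∧
      P.verts = l ++ [v] := by
  obtain ⟨l, hlne, hdec⟩ := dipath_decomp hA huv P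
  have hnd := P.nodup
  rw [hdec] at hnd
  have hndl : l.Nodup := by
    have := (List.nodup_cons.1 hnd).2
    exact (List.nodup_append.1 this).1
  have hul : u ∉ l := fun h => (List.nodup_cons.1 hnd).1 (List.mem_append.2 (Or.inl h))
  have hvl : v ∉ l := by
    have h2 := (List.nodup_cons.1 hnd).2
    rw [List.nodup_append] at h2
    exact fun h => h2.2.2 v h v (by simp) rfl
  have hch : IsChain A (u :: (l ++ [v])) := by
    have := P.chain
    rw [hdec] at this
    exact this
  have hchl : IsChain A l := (hch.tail).prefix ⟨[v], rfl⟩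
  have hchE : IsChain (Rel (iE A u v)) l := by
    apply chain'_strengthen_nodup hchl hndl
    intro x hx y hy hxy hr
    refine Finset.mem_filter.2 ⟨Finset.mem_univ _, hr, ?_, ?_, ?_, ?_, hxy⟩
    · exact fun h => hul (h ▸ hx)
    · exact fun h => hvl (h ▸ hx)
    · exact fun h => hul (h ▸ hy)
    · exact fun h => hvl (h ▸ hy)
  have hhd : l.head hlne ∈ iX A u v := by
    rcases l with _ | ⟨h0, t⟩
    · exact absurd rfl hlne
    have hA0 : A u h0 := by
      have := hch
      rw [show (u :: ((h0 :: t) ++ [v])) = u :: h0 :: (t ++ [v]) by simp,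
        List.isChain_cons_cons] at this
      exact this.1
    refine Finset.mem_filter.2 ⟨Finset.mem_univ _, hA0, ?_, ?_⟩
    · exact fun h => hul (h ▸ List.mem_cons_self (a := h0) (l := t))
    · exact fun h => hvl (h ▸ List.mem_cons_self (a := h0) (l := t))
  have hlst : l.getLast hlne ∈ iY A u v := by
    have hgl : A (l.getLast hlne) v := by
      have h2 : IsChain A ((u :: l) ++ [v]) := by
        rw [show (u :: l) ++ [v] = u :: (l ++ [v]) by simp]
        exact hch
      rw [List.isChain_append] at h2
      apply h2.2.2
      · rw [List.getLast?_eq_getLast (List.cons_ne_nil u l), Option.mem_def,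
          Option.some.injEq, List.getLast_cons hlne]
      · simp
    refine Finset.mem_filter.2 ⟨Finset.mem_univ _, hgl, ?_, ?_⟩
    · exact fun h => hul (h ▸ List.getLast_mem hlne)
    · exact fun h => hvl (h ▸ List.getLast_mem hlne)
  exact ⟨l, ⟨hlne, hchE, hhd, hlst⟩, hndl, hdec⟩

lemma intsep_to_sep (hA : ¬ A u v) (huv : u ≠ v) {S : Finset R}
    (hsep : ∀ P : DiPath A u v, ∃ x ∈ P.interior, (x : R) ∈ S) :
    Sep (iE A u v) (iX A u v) (iY A u v) S := by
  rintro l ⟨hne, hch, hX, hY⟩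
  obtain ⟨l', hne', hch', hnd', hh, hgl, hsub⟩ := chain'_to_nodup l.length l le_rfl hne hch
  have hwk' : IsWk (iE A u v) (iX A u v) (iY A u v) l' := by
    refine ⟨hne', hch', ?_, ?_⟩
    · rw [head_eq_of_head?_eq hne' hne hh]; exact hX
    · rw [getLast_eq_of_getLast?_eq hne' hne hgl]; exact hY
  obtain ⟨P, hP⟩ := wk_to_dipath hA huv hwk' hnd'
  obtain ⟨x, hxint, hxS⟩ := hsep P
  exact ⟨x, hsub x ((dipath_interior_iff P hP x).1 hxint), hxS⟩

lemma dikappa_set_nonempty :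
    Set.Nonempty {m | ∃ P : Fin m → DiPath A u v, Function.Injective P ∧
      ∀ i j, i ≠ j → (P i).interior ∩ (P j).interior = ∅} :=
  ⟨0, Fin.elim0, fun i => i.elim0, fun i => i.elim0⟩

lemma dikappa_bdd (hA : ¬ A u v) (huv : u ≠ v) :
    BddAbove {m | ∃ P : Fin m → DiPath A u v, Function.Injective P ∧
      ∀ i j, i ≠ j → (P i).interior ∩ (P j).interior = ∅} := by
  refine ⟨Fintype.card R, ?_⟩
  rintro m ⟨P, hinj, hdisj⟩
  have hex : ∀ i : Fin m, ∃ x, x ∈ (P i).interior := by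
    intro i
    obtain ⟨l, hlne, hdec⟩ := dipath_decomp hA huv (P i)
    rcases l with _ | ⟨h0, t⟩
    · exact absurd rfl hlne
    exact ⟨h0, (dipath_interior_iff (P i) hdec h0).2 (List.mem_cons_self)⟩
  choose f hf using hex
  have hfinj : Function.Injective f := by
    intro i j h
    by_contra hij
    have := hdisj i j hij
    have hmem : f i ∈ (P i).interior ∩ (P j).interior := ⟨hf i, h ▸ hf j⟩
    rw [this] at hmem
    exact hmem
  simpa using Fintype.card_le_of_injective f hfinj

lemma le_dikappa_of_family (hA : ¬ A u v) (huv : u ≠ v) {m : ℕ} (F : Fin m → List R)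
    (hwk : ∀ i, IsWk (iE A u v) (iX A u v) (iY A u v) (F i) ∧ (F i).Nodup)
    (hdisj : ∀ i j, i ≠ j → ∀ x, x ∈ F i → x ∉ F j) : m ≤ diKappa A u v := by
  have hP : ∀ i : Fin m, ∃ P : DiPath A u v, P.verts = F i ++ [v] :=
    fun i => wk_to_dipath hA huv (hwk i).1 (hwk i).2
  choose P hP using hP
  apply le_csSup (dikappa_bdd hA huv)
  refine ⟨P, ?_, ?_⟩
  · intro i j h
    by_contra hij
    obtain ⟨hne, -, -, -⟩ := (hwk i).1
    rcases hF : F i with _ | ⟨h0, t⟩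
    · exact hne hF
    have h0i : h0 ∈ F i := hF ▸ List.mem_cons_self
    have h0j : h0 ∈ F j := by
      have hint : h0 ∈ (P i).interior := (dipath_interior_iff (P i) (hP i) h0).2 h0i
      rw [h] at hint
      exact (dipath_interior_iff (P j) (hP j) h0).1 hint
    exact hdisj i j hij h0 h0i h0j
  · intro i j hij
    rw [Set.eq_empty_iff_forall_notMem]
    rintro x ⟨hxi, hxj⟩
    exact hdisj i j hij x ((dipath_interior_iff (P i) (hP i) x).1 hxi)
      ((dipath_interior_iff (P j) (hP j) x).1 hxj)

lemma dikappa_le_card (hA : ¬ A u v) (huv : u ≠ v) {S : Finset R}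
    (hsep : ∀ P : DiPath A u v, ∃ x ∈ P.interior, (x : R) ∈ S) :
    diKappa A u v ≤ S.card := by
  have hmem := Nat.sSup_mem (dikappa_set_nonempty (A := A) (u := u) (v := v))
    (dikappa_bdd hA huv)
  obtain ⟨P, hinj, hdisj⟩ := hmem
  have hex : ∀ i : Fin (diKappa A u v), ∃ x, x ∈ (P i).interior ∧ x ∈ S := by
    intro i
    obtain ⟨x, hx, hxS⟩ := hsep (P i)
    exact ⟨x, hx, hxS⟩
  choose f hf using hex
  have hfinj : Function.Injective f := by
    intro i j h
    by_contra hij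
    have := hdisj i j hij
    have hmem2 : f i ∈ (P i).interior ∩ (P j).interior := ⟨(hf i).1, h ▸ (hf j).1⟩
    rw [this] at hmem2
    exact hmem2
  have : Fintype.card (Fin (diKappa A u v)) ≤ Fintype.card {x // x ∈ S} :=
    Fintype.card_le_of_injective (fun i => ⟨f i, (hf i).2⟩)
      (fun i j h => hfinj (congrArg Subtype.val h))
  simpa [Fintype.card_coe] using this

theorem internal_menger (hA : ¬ A u v) (huv : u ≠ v) :
    ∃ S : Finset R, u ∉ S ∧ v ∉ S ∧
      (∀ P : DiPath A u v, ∃ x ∈ P.interior, (x : R) ∈ S) ∧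
      S.card = diKappa A u v := by
  have hloop : ∀ p ∈ iE A u v, p.1 ≠ p.2 := fun p hp => (Finset.mem_filter.1 hp).2.2.2.2.2.2
  obtain ⟨S₀, hS₀, hS₀card⟩ := exists_minSep (iE A u v) (iX A u v) (iY A u v)
  obtain ⟨F, hF, hdisj⟩ := goring (iE A u v).card (iE A u v) le_rfl hloop (iX A u v) (iY A u v)
  set S := (S₀.erase u).erase v with hSdef
  have huS : u ∉ S := fun h => (Finset.mem_erase.1 (Finset.mem_erase.1 h).2).1 rfl
  have hvS : v ∉ S := fun h => (Finset.mem_erase.1 h).1 rfl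
  have hIntSep : ∀ P : DiPath A u v, ∃ x ∈ P.interior, (x : R) ∈ S := by
    intro P
    obtain ⟨l, hwk, hnd, hdec⟩ := dipath_to_wk hA huv P
    obtain ⟨x, hxl, hxS₀⟩ := hS₀ l hwk
    have hxint : x ∈ P.interior := (dipath_interior_iff P hdec x).2 hxl
    obtain ⟨-, hxu, hxv⟩ := id hxint
    exact ⟨x, hxint, Finset.mem_erase.2 ⟨hxv, Finset.mem_erase.2 ⟨hxu, hxS₀⟩⟩⟩
  have hle1 : S.card ≤ S₀.card :=
    Finset.card_le_card (fun x hx => (Finset.mem_erase.1 (Finset.mem_erase.1 hx).2).2)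
  have hle2 : minSep (iE A u v) (iX A u v) (iY A u v) ≤ diKappa A u v :=
    le_dikappa_of_family hA huv F hF hdisj
  have hle3 : diKappa A u v ≤ S.card := dikappa_le_card hA huv hIntSep
  exact ⟨S, huS, hvS, hIntSep, by omega⟩

end Internal

end MG
end

set_option linter.unusedSectionVars false
namespace MG
open List Finset SimpleGraph

variable {R : Type*} [Fintype R] [DecidableEq R] {A : R → R → Prop}

lemma cut_cross {u v : R} (A : R → R → Prop) (C : Finset (R ⊕ R))
    (hu : Sum.inl u ∉ C) (hv : Sum.inr v ∉ C)
    (hnr : ¬ ((shiftGraph A).induce ((↑C : Set (R ⊕ R))ᶜ)).Reachable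
        ⟨Sum.inl u, by simpa using hu⟩ ⟨Sum.inr v, by simpa using hv⟩) :
    ∀ a b : R, Sum.inl a ∉ C → Sum.inr b ∉ C → ¬ (A a b ∨ a = b) := by
  intro a b ha hb hadj
  apply hnr
  have hXa : (Sum.inl a : R ⊕ R) ∈ ((↑C : Set (R ⊕ R))ᶜ) := by simpa using ha
  have hXb : (Sum.inr b : R ⊕ R) ∈ ((↑C : Set (R ⊕ R))ᶜ) := by simpa using hb
  have r1 : ((shiftGraph A).induce ((↑C : Set (R ⊕ R))ᶜ)).Reachable
      ⟨Sum.inl u, by simpa using hu⟩ ⟨Sum.inl a, hXa⟩ := by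
    by_cases h : u = a
    · subst h; exact Reachable.refl _
    · exact SimpleGraph.Adj.reachable
        (show (shiftGraph A).Adj (Sum.inl u) (Sum.inl a) from h)
  have r2 : ((shiftGraph A).induce ((↑C : Set (R ⊕ R))ᶜ)).Reachable
      ⟨Sum.inl a, hXa⟩ ⟨Sum.inr b, hXb⟩ :=
    SimpleGraph.Adj.reachable (show (shiftGraph A).Adj (Sum.inl a) (Sum.inr b) from hadj)
  have r3 : ((shiftGraph A).induce ((↑C : Set (R ⊕ R))ᶜ)).Reachable
      ⟨Sum.inr b, hXb⟩ ⟨Sum.inr v, by simpa using hv⟩ := by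
    by_cases h : b = v
    · subst h; exact Reachable.refl _
    · exact SimpleGraph.Adj.reachable
        (show (shiftGraph A).Adj (Sum.inr b) (Sum.inr v) from h)
  exact (r1.trans r2).trans r3

lemma cut_card (C : Finset (R ⊕ R)) :
    C.card = (Finset.univ.filter (fun w => Sum.inl w ∈ C)).card +
      (Finset.univ.filter (fun w => Sum.inr w ∈ C)).card := by
  have hC : C = (Finset.univ.filter (fun w => Sum.inl w ∈ C)).image Sum.inl ∪
      (Finset.univ.filter (fun w => Sum.inr w ∈ C)).image Sum.inr := by
    ext x
    cases x with
    | inl a => simp [Finset.mem_union, Finset.mem_image, Finset.mem_filter]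
    | inr b => simp [Finset.mem_union, Finset.mem_image, Finset.mem_filter]
  conv_lhs => rw [hC]
  rw [Finset.card_union_of_disjoint, Finset.card_image_of_injective _ Sum.inl_injective,
    Finset.card_image_of_injective _ Sum.inr_injective]
  rw [Finset.disjoint_left]
  rintro x hx hx'
  obtain ⟨a, -, rfl⟩ := Finset.mem_image.1 hx
  obtain ⟨b, -, hb⟩ := Finset.mem_image.1 hx'
  exact Sum.inl_ne_inr hb.symm

lemma meets_inter {L Rt : Finset R} {v : R} (hvL : v ∈ L)
    (F2 : ∀ a b : R, a ∉ L → A a b → b ∈ Rt) :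
    ∀ (l : List R) (a : R), a ∉ L → List.Chain A a l →
      (a :: l).getLast (List.cons_ne_nil a l) = v → ∃ x ∈ l, x ∈ L ∧ x ∈ Rt := by
  intro l
  induction l with
  | nil =>
    intro a haL hch hlast
    simp only [List.getLast_singleton] at hlast
    exact absurd (hlast ▸ hvL) haL
  | cons w rest ih =>
    intro a haL hch hlast
    obtain ⟨haw, hch'⟩ := List.isChain_cons_cons.1 hch
    have hwRt : w ∈ Rt := F2 a w haL haw
    by_cases hwL : w ∈ L
    · exact ⟨w, List.mem_cons_self, hwL, hwRt⟩
    · have hlast' : (w :: rest).getLast (List.cons_ne_nil _ _) = v := by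
        rw [← hlast, List.getLast_cons (List.cons_ne_nil _ _)]
      obtain ⟨x, hx, hxL, hxRt⟩ := ih w hwL hch' hlast'
      exact ⟨x, List.mem_cons_of_mem _ hx, hxL, hxRt⟩

lemma rtg_dipath {u v : R} {S : Finset R}
    (h : Relation.ReflTransGen (fun a b => A a b ∧ b ∉ S) u v) :
    ∃ P : DiPath A u v, ∀ x ∈ P.interior, x ∉ S := by
  obtain ⟨l, hchain, hlast⟩ := List.exists_isChain_cons_of_relationReflTransGen h
  have hch' : IsChain (fun a b => A a b ∧ b ∉ S) (u :: l) := hchain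
  obtain ⟨l', hne', hch2, hnd', hh, hgl, hsub⟩ :=
    chain'_to_nodup (u :: l).length (u :: l) le_rfl (by simp) hch'
  rcases l' with _ | ⟨h0, t⟩
  · exact absurd rfl hne'
  have h0u : h0 = u := by
    simp only [List.head?_cons, Option.some.injEq] at hh
    exact hh
  subst h0u
  have hends : (h0 :: t).getLast (List.cons_ne_nil _ _) = v := by
    rw [getLast_eq_of_getLast?_eq (List.cons_ne_nil _ _) (List.cons_ne_nil h0 l) hgl]
    exact hlast
  refine ⟨⟨t, List.IsChain.imp (fun a b hab => hab.1) hch2, hends, hnd'⟩, ?_⟩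
  intro x hxint
  obtain ⟨hxmem, hxu, hxv⟩ := hxint
  have hxt : x ∈ t := by
    rcases List.mem_cons.1 hxmem with rfl | hx
    · exact absurd rfl hxu
    · exact hx
  obtain ⟨y, -, hr⟩ := mem_tail_snd hch2 (by simpa using hxt)
  exact hr.2

end MG

/-- for distinct nonadjacent `u, v'` in the connectivity-shift graph
of a digraph on `k` vertices, every `u`-`v'` vertex cut has size at least `k`, and
the minimum `u`-`v'` vertex cut has size exactly `k + κ_D(u, v)`. -/
theorem stmt13 {R : Type*} [Fintype R] (A : R → R → Prop) (k : ℕ)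
    (hcard : Fintype.card R = k) (u v : R) (huv : u ≠ v) (hnadj : ¬ A u v) :
    (∀ C : Finset (R ⊕ R), (hu : Sum.inl u ∉ C) → (hv : Sum.inr v ∉ C) →
        ¬ ((shiftGraph A).induce ((↑C : Set (R ⊕ R))ᶜ)).Reachable
            ⟨Sum.inl u, by simpa using hu⟩ ⟨Sum.inr v, by simpa using hv⟩ →
        k ≤ C.card) ∧
    IsLeast {m | ∃ C : Finset (R ⊕ R), ∃ hu : Sum.inl u ∉ C, ∃ hv : Sum.inr v ∉ C,
        ¬ ((shiftGraph A).induce ((↑C : Set (R ⊕ R))ᶜ)).Reachable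
            ⟨Sum.inl u, by simpa using hu⟩ ⟨Sum.inr v, by simpa using hv⟩ ∧
        C.card = m} (k + diKappa A u v) := by
  classical
  have hk : Fintype.card R = k := hcard
  -- Part 1: lower bounds for any cut
  have lower : ∀ C : Finset (R ⊕ R), Sum.inl u ∉ C → Sum.inr v ∉ C →
      (∀ a b : R, Sum.inl a ∉ C → Sum.inr b ∉ C → ¬ (A a b ∨ a = b)) →
      k + diKappa A u v ≤ C.card := by
    intro C hu hv hcross
    set L := Finset.univ.filter (fun w => Sum.inl w ∈ C) with hLdef
    set Rt := Finset.univ.filter (fun w => Sum.inr w ∈ C) with hRtdef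
    have F1 : ∀ a : R, a ∈ L ∨ a ∈ Rt := by
      intro a
      by_contra h
      push_neg at h
      have h1 : Sum.inl a ∉ C := fun hc => h.1 (Finset.mem_filter.2 ⟨Finset.mem_univ _, hc⟩)
      have h2 : Sum.inr a ∉ C := fun hc => h.2 (Finset.mem_filter.2 ⟨Finset.mem_univ _, hc⟩)
      exact hcross a a h1 h2 (Or.inr rfl)
    have F2 : ∀ a b : R, a ∉ L → A a b → b ∈ Rt := by
      intro a b haL hab
      by_contra hbRt
      have h1 : Sum.inl a ∉ C := fun hc => haL (Finset.mem_filter.2 ⟨Finset.mem_univ _, hc⟩)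
      have h2 : Sum.inr b ∉ C := fun hc => hbRt (Finset.mem_filter.2 ⟨Finset.mem_univ _, hc⟩)
      exact hcross a b h1 h2 (Or.inl hab)
    have huL : u ∉ L := fun h => hu (Finset.mem_filter.1 h).2
    have hvRt : v ∉ Rt := fun h => hv (Finset.mem_filter.1 h).2
    have hvL : v ∈ L := (F1 v).resolve_right hvRt
    have hsep : ∀ P : DiPath A u v, ∃ x ∈ P.interior, x ∈ L ∩ Rt := by
      intro P
      obtain ⟨x, hx, hxL, hxRt⟩ := MG.meets_inter hvL F2 P.verts u huL P.chain P.ends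
      refine ⟨x, ⟨List.mem_cons_of_mem _ hx, ?_, ?_⟩, Finset.mem_inter.2 ⟨hxL, hxRt⟩⟩
      · exact fun h => huL (h ▸ hxL)
      · exact fun h => hvRt (h ▸ hxRt)
    have hκ : diKappa A u v ≤ (L ∩ Rt).card := MG.dikappa_le_card hnadj huv hsep
    have hcardC := MG.cut_card C
    rw [← hLdef, ← hRtdef] at hcardC
    have hunion : L ∪ Rt = Finset.univ := by
      apply Finset.eq_univ_iff_forall.2
      intro a
      rcases F1 a with h | h
      · exact Finset.mem_union.2 (Or.inl h)
      · exact Finset.mem_union.2 (Or.inr h)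
    have hui := Finset.card_union_add_card_inter L Rt
    rw [hunion, Finset.card_univ, hk] at hui
    omega
  constructor
  · intro C hu hv hnr
    have := lower C hu hv (MG.cut_cross A C hu hv hnr)
    omega
  constructor
  · -- membership: construct a minimum cut
    obtain ⟨S, huS, hvS, hIntSep, hScard⟩ := MG.internal_menger hnadj huv
    set X' := Finset.univ.filter
      (fun w => Relation.ReflTransGen (fun a b => A a b ∧ b ∉ S) u w) with hX'def
    have huX' : u ∈ X' := Finset.mem_filter.2 ⟨Finset.mem_univ _, Relation.ReflTransGen.refl⟩
    have hX'S : ∀ w ∈ X', w ∉ S := by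
      intro w hw hwS
      have hrtg := (Finset.mem_filter.1 hw).2
      rcases hrtg.cases_tail with h | ⟨c, -, hc⟩
      · exact huS (h ▸ hwS)
      · exact hc.2 hwS
    have hvX' : v ∉ X' := by
      intro hvX
      obtain ⟨P, hP⟩ := MG.rtg_dipath (Finset.mem_filter.1 hvX).2
      obtain ⟨x, hxint, hxS⟩ := hIntSep P
      exact hP x hxint hxS
    set C : Finset (R ⊕ R) := ((Finset.univ \ X').image Sum.inl) ∪
      ((X' ∪ S).image Sum.inr) with hCdef
    have huC : Sum.inl u ∉ C := by
      intro h
      rcases Finset.mem_union.1 h with h | h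
      · obtain ⟨a, ha, hae⟩ := Finset.mem_image.1 h
        have : a = u := Sum.inl_injective hae
        subst this
        exact (Finset.mem_sdiff.1 ha).2 huX'
      · obtain ⟨b, -, hbe⟩ := Finset.mem_image.1 h
        exact Sum.inl_ne_inr hbe.symm
    have hvC : Sum.inr v ∉ C := by
      intro h
      rcases Finset.mem_union.1 h with h | h
      · obtain ⟨a, -, hae⟩ := Finset.mem_image.1 h
        exact Sum.inl_ne_inr hae
      · obtain ⟨b, hb, hbe⟩ := Finset.mem_image.1 h
        have : b = v := Sum.inr_injective hbe
        subst this
        rcases Finset.mem_union.1 hb with h' | h'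
        · exact hvX' h'
        · exact hvS h'
    have hdisjXS : Disjoint X' S := by
      rw [Finset.disjoint_left]
      exact hX'S
    have hcardC : C.card = k + S.card := by
      rw [hCdef, Finset.card_union_of_disjoint, Finset.card_image_of_injective _ Sum.inl_injective,
        Finset.card_image_of_injective _ Sum.inr_injective, Finset.card_sdiff_of_subset (Finset.subset_univ _),
        Finset.card_union_of_disjoint hdisjXS, Finset.card_univ, hk]
      · have hXle : X'.card ≤ k := by
          have := Finset.card_le_univ X'
          rw [hk] at this
          exact this
        omega
      · rw [Finset.disjoint_left]
        rintro x hx hx'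
        obtain ⟨a, -, rfl⟩ := Finset.mem_image.1 hx
        obtain ⟨b, -, hb⟩ := Finset.mem_image.1 hx'
        exact Sum.inl_ne_inr hb.symm
    have hnr : ¬ ((shiftGraph A).induce ((↑C : Set (R ⊕ R))ᶜ)).Reachable
        ⟨Sum.inl u, by simpa using huC⟩ ⟨Sum.inr v, by simpa using hvC⟩ := by
      intro hr
      obtain ⟨p⟩ := hr
      have claim : ∀ (s t : ((↑C : Set (R ⊕ R))ᶜ : Set (R ⊕ R)))
          (q : ((shiftGraph A).induce ((↑C : Set (R ⊕ R))ᶜ)).Walk s t),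
          (∃ a ∈ X', s.val = Sum.inl a) → ∃ a ∈ X', t.val = Sum.inl a := by
        intro s t q
        induction q with
        | nil => exact id
        | @cons s m t hadj q ih =>
          rintro ⟨a, haX, hs⟩
          apply ih
          have hadj' : (shiftGraph A).Adj s.val m.val := hadj
          rw [hs] at hadj'
          obtain ⟨mval, hm⟩ := m
          rcases mval with a' | b
          · refine ⟨a', ?_, rfl⟩
            have hm' : Sum.inl a' ∉ C := by simpa using hm
            by_contra ha'
            apply hm'
            rw [hCdef]
            exact Finset.mem_union.2 (Or.inl (Finset.mem_image.2
              ⟨a', Finset.mem_sdiff.2 ⟨Finset.mem_univ _, ha'⟩, rfl⟩))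
          · exfalso
            have hm' : Sum.inr b ∉ C := by simpa using hm
            have hbXS : b ∉ X' ∪ S := by
              intro hb
              exact hm' (Finset.mem_union.2 (Or.inr (Finset.mem_image.2 ⟨b, hb, rfl⟩)))
            have hadj'' : A a b ∨ a = b := hadj'
            rcases hadj'' with h | h
            · apply hbXS
              apply Finset.mem_union.2 (Or.inl _)
              refine Finset.mem_filter.2 ⟨Finset.mem_univ _, ?_⟩
              exact Relation.ReflTransGen.tail (Finset.mem_filter.1 haX).2
                ⟨h, fun hbS => hbXS (Finset.mem_union.2 (Or.inr hbS))⟩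
            · subst h
              exact hbXS (Finset.mem_union.2 (Or.inl haX))
      obtain ⟨a, -, ha⟩ := claim _ _ p ⟨u, huX', rfl⟩
      exact Sum.inl_ne_inr ha.symm
    exact ⟨C, huC, hvC, hnr, by rw [hcardC, hScard]⟩
  · -- lower bound for the set
    rintro m ⟨C, hu, hv, hnr, rfl⟩
    exact lower C hu hv (MG.cut_cross A C hu hv hnr)
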